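/- arXiv:1502.02763 — 4 statements merged into one kernel-verified Lean document; each statement's English description precedes it below -/
import Mathlib

section
/- Let A = (a_1,…,a_K) and B = (b_1,…,b_K) be two lists of K distinct items from E such that a_i = b_j only if i = j, and let (w(e))_{e∈E} be mutually independent Bernoulli random variables with means w̄(e). Then E[∏_{k=1}^K (1 − w(a_k)) − ∏_{k=1}^K (1 − w(b_k))] = Σ_{k=1}^K (w̄(b_k) − w̄(a_k)) · P(w(a_1) = ⋯ = w(a_{k−1}) = 0) · ∏_{j=k+1}^K (1 − w̄(b_j)). -/
/-!
Each of `∏ₖ (1 - w(aₖ))` and `∏ₖ (1 - w(bₖ))` is a product of independent factors, so its mean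
is `∏ₖ (1 - w̄(aₖ))`, resp. `∏ₖ (1 - w̄(bₖ))`. The right-hand side is the telescoping expansion
`∏ xₖ - ∏ yₖ = ∑ₖ (xₖ - yₖ) ∏_{i<k} xᵢ ∏_{j>k} yⱼ` of the difference of these means, once
`∏_{i<k} (1 - w̄(aᵢ))` is recognised as the probability that `w(a₁), …, w(a_{k-1})` all vanish:
`∏_{i<k} (1 - w(aᵢ))` is the indicator of that event.
-/

open MeasureTheory ProbabilityTheory Finset

theorem Finset.prod_sub_prod_eq_sum_ordered {ι R : Type*} [CommRing R] [LinearOrder ι]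
    (s : Finset ι) (x y : ι → R) :
    ∏ i ∈ s, x i - ∏ i ∈ s, y i =
      ∑ i ∈ s, (x i - y i) * (∏ j ∈ s with j < i, x j) * ∏ j ∈ s with i < j, y j := by
  have h := prod_add_ordered s y (x - y)
  simp only [Pi.sub_apply, add_sub_cancel] at h
  rw [h, add_sub_cancel_left]

namespace ProbabilityTheory

variable {Ω ι : Type*} {X : ι → Ω → ℝ}

theorem prod_one_sub_eq_indicator (hX : ∀ i ω, X i ω = 0 ∨ X i ω = 1) (s : Finset ι) :
    (fun ω => ∏ i ∈ s, (1 - X i ω)) = {ω | ∀ i ∈ s, X i ω = 0}.indicator 1 := by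
  ext ω
  by_cases hω : ω ∈ {ω | ∀ i ∈ s, X i ω = 0}
  · rw [Set.indicator_of_mem hω]
    exact prod_eq_one fun i hi => by rw [hω i hi, sub_zero]
  · rw [Set.indicator_of_notMem hω]
    obtain ⟨i, hi, hne⟩ := not_forall₂.mp hω
    exact prod_eq_zero hi (by rw [(hX i ω).resolve_left hne, sub_self])

variable [MeasurableSpace Ω] {μ : Measure Ω}

theorem measurableSet_forall_eq_zero (hm : ∀ i, Measurable (X i)) (s : Finset ι) :
    MeasurableSet {ω | ∀ i ∈ s, X i ω = 0} := by
  simp only [Set.ofPred_forall]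
  exact MeasurableSet.biInter s.countable_toSet fun i _ => hm i (measurableSet_singleton 0)

theorem integrable_of_eq_zero_or_eq_one [IsFiniteMeasure μ] {f : Ω → ℝ} (hf : Measurable f)
    (h01 : ∀ ω, f ω = 0 ∨ f ω = 1) : Integrable f μ :=
  .of_bound hf.aestronglyMeasurable 1 <| .of_forall fun ω => by
    rcases h01 ω with h | h <;> simp [h]

theorem integrable_prod_one_sub [IsFiniteMeasure μ] (hX : ∀ i ω, X i ω = 0 ∨ X i ω = 1)
    (hm : ∀ i, Measurable (X i)) (s : Finset ι) :
    Integrable (fun ω => ∏ i ∈ s, (1 - X i ω)) μ := by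
  rw [prod_one_sub_eq_indicator hX]
  exact (integrable_const 1).indicator (measurableSet_forall_eq_zero hm s)

variable [IsProbabilityMeasure μ]

theorem iIndepFun.integral_prod_one_sub (hI : iIndepFun X μ) (hm : ∀ i, Measurable (X i))
    (hint : ∀ i, Integrable (X i) μ) (s : Finset ι) :
    ∫ ω, ∏ i ∈ s, (1 - X i ω) ∂μ = ∏ i ∈ s, (1 - ∫ ω, X i ω ∂μ) := by
  have hs := (hI.precomp Subtype.val_injective (g := ((↑) : s → ι))).integral_fun_prod_comp
    (f := fun _ x => 1 - x) (fun i => (hm i).aemeasurable) fun _ => by fun_prop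
  simp only [fun ω => prod_coe_sort s fun i => 1 - X i ω,
    prod_coe_sort s fun i => ∫ ω, 1 - X i ω ∂μ] at hs
  rw [hs]
  refine prod_congr rfl fun i _ => ?_
  rw [integral_sub (integrable_const 1) (hint i), integral_const, probReal_univ, one_smul]

theorem iIndepFun.measureReal_forall_eq_zero (hI : iIndepFun X μ)
    (hX : ∀ i ω, X i ω = 0 ∨ X i ω = 1) (hm : ∀ i, Measurable (X i)) (s : Finset ι) :
    μ.real {ω | ∀ i ∈ s, X i ω = 0} = ∏ i ∈ s, (1 - ∫ ω, X i ω ∂μ) := by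
  rw [← integral_indicator_one (measurableSet_forall_eq_zero hm s),
    ← prod_one_sub_eq_indicator hX,
    hI.integral_prod_one_sub hm fun i => integrable_of_eq_zero_or_eq_one (hm i) (hX i)]

end ProbabilityTheory

theorem regret_decomposition_identity_general {E : Type*}
    {Ω : Type*} [MeasurableSpace Ω] (μ : Measure Ω) [IsProbabilityMeasure μ]
    (K : ℕ) (a b : Fin K → E)
    (ha : Function.Injective a) (hb : Function.Injective b)
    (w : E → Ω → ℝ) (wbar : E → ℝ)
    (hmeas : ∀ e, Measurable (w e))
    (hbin : ∀ e ω, w e ω = 0 ∨ w e ω = 1)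
    (hmean : ∀ e, (∫ ω, w e ω ∂μ) = wbar e)
    (hindep : iIndepFun (m := fun _ : E => Real.measurableSpace) w μ) :
    (∫ ω, ((∏ k : Fin K, (1 - w (a k) ω)) - ∏ k : Fin K, (1 - w (b k) ω)) ∂μ) =
      ∑ k : Fin K,
        (wbar (b k) - wbar (a k)) *
          (μ {ω | ∀ i : Fin K, i < k → w (a i) ω = 0}).toReal *
          (∏ j ∈ Finset.univ.filter (fun j : Fin K => k < j), (1 - wbar (b j))) := by
  have hint e : Integrable (w e) μ := integrable_of_eq_zero_or_eq_one (hmeas e) (hbin e)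
  have hA := hindep.precomp ha
  have hB := hindep.precomp hb
  rw [integral_sub (integrable_prod_one_sub (fun _ => hbin _) (fun _ => hmeas _) _)
      (integrable_prod_one_sub (fun _ => hbin _) (fun _ => hmeas _) _),
    hA.integral_prod_one_sub (fun _ => hmeas _) (fun _ => hint _),
    hB.integral_prod_one_sub (fun _ => hmeas _) (fun _ => hint _),
    prod_sub_prod_eq_sum_ordered]
  refine sum_congr rfl fun k _ => ?_
  have hprob := hA.measureReal_forall_eq_zero (fun _ => hbin _) (fun _ => hmeas _)
    (univ.filter (· < k))
  simp only [mem_filter, mem_univ, true_and, measureReal_def] at hprob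
  simp only [hprob, hmean]
  ring

/-- for two lists `A = (a_1, …, a_K)` and `B = (b_1, …, b_K)` of distinct
items with `a_i = b_j` only if `i = j`, and mutually independent Bernoulli random
variables `(w(e))_{e ∈ E}` with means `w̄(e) ∈ [0,1]`,
`E[∏_k (1 − w(a_k)) − ∏_k (1 − w(b_k))]
  = Σ_k (w̄(b_k) − w̄(a_k)) · P(w(a_1) = ⋯ = w(a_{k−1}) = 0) · ∏_{j>k} (1 − w̄(b_j))`. -/
theorem regret_decomposition_identity {E : Type*} [Fintype E]
    {Ω : Type*} [MeasurableSpace Ω] (μ : Measure Ω) [IsProbabilityMeasure μ]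
    (K : ℕ) (a b : Fin K → E)
    (ha : Function.Injective a) (hb : Function.Injective b)
    (hab : ∀ i j : Fin K, a i = b j → i = j)
    (w : E → Ω → ℝ) (wbar : E → ℝ)
    (hmeas : ∀ e, Measurable (w e))
    (hbin : ∀ e ω, w e ω = 0 ∨ w e ω = 1)
    (hmean : ∀ e, (∫ ω, w e ω ∂μ) = wbar e)
    (hw01 : ∀ e, wbar e ∈ Set.Icc (0 : ℝ) 1)
    (hindep : iIndepFun (m := fun _ : E => Real.measurableSpace) w μ) :
    (∫ ω, ((∏ k : Fin K, (1 - w (a k) ω)) - ∏ k : Fin K, (1 - w (b k) ω)) ∂μ) =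
      ∑ k : Fin K,
        (wbar (b k) - wbar (a k)) *
          (μ {ω | ∀ i : Fin K, i < k → w (a i) ω = 0}).toReal *
          (∏ j ∈ Finset.univ.filter (fun j : Fin K => k < j), (1 - wbar (b j))) :=
  regret_decomposition_identity_general μ K a b ha hb w wbar hmeas hbin hmean hindep
end

section
/- Let p ∈ (0,1) and Δ ∈ (0, 1 − p). Then ∫_{Δ}^{1−p} 1 / kl(p, p + x) dx ≤ (Δ / kl(p, p + Δ)) · log(1/Δ). -/
/-!
Since `q ↦ kl(p, q)` is convex and vanishes at `q = p`, the secant slope `t ↦ kl(p, p + t) / t`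
is nondecreasing on `(0, 1 - p)`. Hence `1 / kl(p, p + t) ≤ (Δ / kl(p, p + Δ)) / t` for `t ≥ Δ`,
and integrating gives the bound `(Δ / kl(p, p + Δ)) · log((1 - p) / Δ)`.
At the endpoint `t = 1 - p` the integrand is the junk value `1 / (p log p) < 0`, so all bounds
are taken on the open interval.
-/

/-- The Kullback–Leibler divergence between Bernoulli distributions with means `p`, `q`:
`kl(p, q) = p·log(p/q) + (1−p)·log((1−p)/(1−q))`. -/
noncomputable def klBer (p q : ℝ) : ℝ :=
  p * Real.log (p / q) + (1 - p) * Real.log ((1 - p) / (1 - q))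

open Real Set MeasureTheory

lemma mul_log_div_eq_sub (x : ℝ) {y : ℝ} (hy : y ≠ 0) :
    x * log (x / y) = x * log x - x * log y := by
  rcases eq_or_ne x 0 with rfl | hx
  · simp
  · rw [log_div hx hy, mul_sub]

lemma sub_lt_mul_log_div {x y : ℝ} (hx : 0 < x) (hy : 0 < y) (hxy : x ≠ y) :
    x - y < x * log (x / y) := by
  have h : log (y / x) < y / x - 1 :=
    log_lt_sub_one_of_pos (div_pos hy hx) (by rwa [ne_eq, div_eq_one_iff_eq hx.ne', eq_comm])
  calc x - y = x * -(y / x - 1) := by field_simp; ring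
    _ < x * -log (y / x) := by gcongr
    _ = x * log (x / y) := by rw [← log_inv, inv_div]

lemma klBer_self (p : ℝ) : klBer p p = 0 := by
  simp [klBer]

lemma klBer_pos {p q : ℝ} (hp : p ∈ Ioo 0 1) (hq : q ∈ Ioo 0 1) (hpq : p ≠ q) :
    0 < klBer p q := by
  have h₁ := sub_lt_mul_log_div hp.1 hq.1 hpq
  have h₂ := sub_lt_mul_log_div (sub_pos.2 hp.2) (sub_pos.2 hq.2) (sub_right_injective.ne hpq)
  rw [klBer]
  linarith

lemma klBer_eq_of_mem_Ioo (p : ℝ) {q : ℝ} (hq : q ∈ Ioo 0 1) :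
    klBer p q = (p * log p + (1 - p) * log (1 - p)) + p * -log q + (1 - p) * -log (1 - q) := by
  rw [klBer, mul_log_div_eq_sub _ hq.1.ne', mul_log_div_eq_sub _ (sub_pos.2 hq.2).ne']
  ring

lemma convexOn_neg_log_one_sub : ConvexOn ℝ (Iio (1 : ℝ)) fun q => -log (1 - q) := by
  have h := strictConcaveOn_log_Ioi.concaveOn.neg.comp_affineMap (AffineMap.lineMap (1 : ℝ) 0)
  have hs : AffineMap.lineMap (1 : ℝ) 0 ⁻¹' Ioi 0 = Iio (1 : ℝ) := by
    ext q; simp [AffineMap.lineMap_apply]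
  rw [hs] at h
  exact h.congr fun q _ => by simp [AffineMap.lineMap_apply, neg_add_eq_sub]

lemma convexOn_klBer {p : ℝ} (hp : p ∈ Icc 0 1) : ConvexOn ℝ (Ioo 0 1) (klBer p) := by
  have h₁ : ConvexOn ℝ (Ioo 0 1) fun q => p * -log q :=
    (strictConcaveOn_log_Ioi.concaveOn.neg.subset Ioo_subset_Ioi_self (convex_Ioo 0 1)).smul hp.1
  have h₂ : ConvexOn ℝ (Ioo 0 1) fun q => (1 - p) * -log (1 - q) :=
    (convexOn_neg_log_one_sub.subset Ioo_subset_Iio_self (convex_Ioo 0 1)).smul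
      (sub_nonneg.2 hp.2)
  have h₀ : ConvexOn ℝ (Ioo 0 1) fun _ : ℝ => p * log p + (1 - p) * log (1 - p) :=
    convexOn_const _ (convex_Ioo 0 1)
  exact ((h₀.add h₁).add h₂).congr fun q hq => (klBer_eq_of_mem_Ioo p hq).symm

lemma add_mem_Ioo_zero_one {p t : ℝ} (hp : p ∈ Ioo 0 1) (ht : t ∈ Ioo 0 (1 - p)) :
    p + t ∈ Ioo 0 1 :=
  ⟨by linarith [hp.1, ht.1], by linarith [ht.2]⟩

lemma klBer_add_pos {p t : ℝ} (hp : p ∈ Ioo 0 1) (ht : t ∈ Ioo 0 (1 - p)) :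
    0 < klBer p (p + t) :=
  klBer_pos hp (add_mem_Ioo_zero_one hp ht) (by linarith [ht.1])

lemma monotoneOn_klBer_add_div {p : ℝ} (hp : p ∈ Ioo 0 1) :
    MonotoneOn (fun t => klBer p (p + t) / t) (Ioo 0 (1 - p)) := by
  intro s hs t ht hst
  have h := (convexOn_klBer (Ioo_subset_Icc_self hp)).secant_mono hp
    (add_mem_Ioo_zero_one hp hs) (add_mem_Ioo_zero_one hp ht)
    (by linarith [hs.1]) (by linarith [ht.1]) (by linarith)
  simpa [klBer_self] using h

lemma one_div_klBer_add_le {p Δ t : ℝ} (hp : p ∈ Ioo 0 1) (hΔ : 0 < Δ) (hΔt : Δ ≤ t)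
    (ht : t < 1 - p) : 1 / klBer p (p + t) ≤ Δ / klBer p (p + Δ) * t⁻¹ := by
  have ht0 : 0 < t := hΔ.trans_le hΔt
  have hklΔ := klBer_add_pos hp ⟨hΔ, hΔt.trans_lt ht⟩
  have hklt := klBer_add_pos hp ⟨ht0, ht⟩
  have h := monotoneOn_klBer_add_div hp ⟨hΔ, hΔt.trans_lt ht⟩ ⟨ht0, ht⟩ hΔt
  rw [div_le_div_iff₀ hΔ ht0] at h
  field_simp
  linarith

lemma intervalIntegral_mono_of_nonneg_on_Ioo {μ : Measure ℝ} [NullSingletonClass μ]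
    {f g : ℝ → ℝ} {a b : ℝ} (hab : a ≤ b) (hg : IntervalIntegrable g μ a b)
    (hf : ∀ x ∈ Ioo a b, 0 ≤ f x) (hfg : ∀ x ∈ Ioo a b, f x ≤ g x) :
    ∫ x in a..b, f x ∂μ ≤ ∫ x in a..b, g x ∂μ := by
  simp only [intervalIntegral.integral_of_le hab, integral_Ioc_eq_integral_Ioo]
  exact integral_mono_of_nonneg (ae_restrict_of_forall_mem measurableSet_Ioo hf)
    (hg.1.mono_set Ioo_subset_Ioc_self) (ae_restrict_of_forall_mem measurableSet_Ioo hfg)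

lemma intervalIntegrable_inv_of_pos {a b : ℝ} (ha : 0 < a) (hab : a ≤ b) :
    IntervalIntegrable (fun x => x⁻¹) volume a b := by
  refine intervalIntegrable_inv_iff.2 (Or.inr fun h => ?_)
  rw [uIcc_of_le hab] at h
  exact ha.not_ge h.1

/-- for `p ∈ (0,1)` and `Δ ∈ (0, 1 − p)`,
`∫_{Δ}^{1−p} 1 / kl(p, p + x) dx ≤ (Δ / kl(p, p + Δ)) · log(1/Δ)`. -/
theorem integral_inv_klBer_le (p Δ : ℝ) (hp : p ∈ Set.Ioo (0 : ℝ) 1)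
    (hΔ : 0 < Δ) (hΔp : Δ < 1 - p) :
    (∫ x in Δ..(1 - p), 1 / klBer p (p + x)) ≤
      Δ / klBer p (p + Δ) * Real.log (1 / Δ) := by
  have h1p : 0 < 1 - p := hΔ.trans hΔp
  have hc : 0 ≤ Δ / klBer p (p + Δ) := (div_pos hΔ (klBer_add_pos hp ⟨hΔ, hΔp⟩)).le
  calc (∫ x in Δ..(1 - p), 1 / klBer p (p + x))
      ≤ ∫ x in Δ..(1 - p), Δ / klBer p (p + Δ) * x⁻¹ :=
        intervalIntegral_mono_of_nonneg_on_Ioo hΔp.le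
          ((intervalIntegrable_inv_of_pos hΔ hΔp.le).const_mul _)
          (fun t ht => (one_div_pos.2 (klBer_add_pos hp ⟨hΔ.trans ht.1, ht.2⟩)).le)
          fun t ht => one_div_klBer_add_le hp hΔ ht.1.le ht.2
    _ = Δ / klBer p (p + Δ) * log ((1 - p) / Δ) := by
      rw [intervalIntegral.integral_const_mul, integral_inv_of_pos hΔ h1p]
    _ ≤ Δ / klBer p (p + Δ) * log (1 / Δ) := by
      gcongr
      linarith [hp.1]
end

section
/- Let Δ_1 ≥ Δ_2 ≥ … ≥ Δ_K > 0 be real numbers. Then Δ_1 · (1/Δ_1²) + Σ_{k=2}^K Δ_k · (1/Δ_k² − 1/Δ_{k−1}²) ≤ 2 / Δ_K. -/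
/-- for `Δ_1 ≥ Δ_2 ≥ … ≥ Δ_K > 0`,
`Δ_1 · (1/Δ_1²) + Σ_{k=2}^K Δ_k · (1/Δ_k² − 1/Δ_{k−1}²) ≤ 2 / Δ_K`. -/
theorem ucb1_peeling (K : ℕ) (hK : 1 ≤ K) (Δ : ℕ → ℝ)
    (hmono : ∀ k, 1 ≤ k → k < K → Δ (k + 1) ≤ Δ k)
    (hpos : ∀ k, 1 ≤ k → k ≤ K → 0 < Δ k) :
    Δ 1 * (1 / (Δ 1) ^ 2) +
        (∑ k ∈ Finset.Icc 2 K, Δ k * (1 / (Δ k) ^ 2 - 1 / (Δ (k - 1)) ^ 2)) ≤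
      2 / Δ K := by
  induction K, hK using Nat.le_induction with
  | base =>
    have h1 : 0 < Δ 1 := hpos 1 le_rfl le_rfl
    have : Finset.Icc 2 1 = (∅ : Finset ℕ) := by decide
    rw [this, Finset.sum_empty]
    rw [div_eq_mul_inv, pow_two, mul_inv, one_mul, ← mul_assoc,
      mul_inv_cancel₀ h1.ne', one_mul]
    rw [add_zero]
    rw [div_eq_mul_inv]
    nlinarith [inv_pos.mpr h1]
  | succ n hn ih =>
    have hmono' : ∀ k, 1 ≤ k → k < n → Δ (k + 1) ≤ Δ k :=
      fun k h1 h2 => hmono k h1 (h2.trans (Nat.lt_succ_self n))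
    have hpos' : ∀ k, 1 ≤ k → k ≤ n → 0 < Δ k :=
      fun k h1 h2 => hpos k h1 (h2.trans (Nat.le_succ n))
    have key := ih hmono' hpos'
    rw [Finset.sum_Icc_succ_top (by omega : 2 ≤ n + 1)]
    have hab : Δ (n + 1) ≤ Δ n := hmono n hn (Nat.lt_succ_self n)
    have ha : 0 < Δ (n + 1) := hpos (n + 1) (by omega) le_rfl
    have hb : 0 < Δ n := hpos' n hn le_rfl
    have hstep : 2 / Δ n + Δ (n + 1) * (1 / (Δ (n + 1)) ^ 2 - 1 / (Δ n) ^ 2)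
        ≤ 2 / Δ (n + 1) := by
      have e : 2 / Δ n + Δ (n + 1) * (1 / (Δ (n + 1)) ^ 2 - 1 / (Δ n) ^ 2)
          = (2 * Δ (n + 1) * Δ n + Δ n ^ 2 - Δ (n + 1) ^ 2) / (Δ n ^ 2 * Δ (n + 1)) := by
        field_simp
        ring
      rw [e, div_le_div_iff₀ (by positivity) ha]
      nlinarith [sq_nonneg (Δ n - Δ (n + 1)), mul_pos ha hb]
    have : (n + 1 - 1) = n := rfl
    rw [this]
    linarith
end

section
/- Let E be a finite ground set with |E| = L, let w̄ : E → [0,1], let γ ∈ (0,1], and let 1 ≤ K ≤ L. For a list A = (a_1,…,a_K) of K distinct items of E define g(A) = Σ_{k=1}^K γ^{k−1} · w̄(a_k) · ∏_{i=1}^{k−1} (1 − w̄(a_i)). Let A* = (a*_1,…,a*_K) be a list of K distinct items such that w̄(a*_1) ≥ w̄(a*_2) ≥ … ≥ w̄(a*_K) and w̄(a*_K) ≥ w̄(e) for every item e of E not in A* (i.e., A* consists of K items with the largest weights, ordered in decreasing order of their weights). Then g(A) ≤ g(A*) for every list A of K distinct items of E. -/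
open Finset

private lemma aux_filter_prod {K : ℕ} (g : ℕ → ℝ) (m : ℕ) (hm : m ≤ K) :
    ∏ i ∈ Finset.univ.filter (fun i : Fin K => (i : ℕ) < m), g (i : ℕ)
      = ∏ i ∈ Finset.range m, g i := by
  have himg : Finset.image (Fin.val) (Finset.univ.filter (fun i : Fin K => (i : ℕ) < m))
      = Finset.range m := by
    ext n
    simp only [Finset.mem_image, Finset.mem_filter, Finset.mem_univ, true_and,
      Finset.mem_range]
    constructor
    · rintro ⟨i, hi, rfl⟩; exact hi
    · intro hn; exact ⟨⟨n, lt_of_lt_of_le hn hm⟩, hn, rfl⟩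
  rw [← himg, Finset.prod_image (fun a _ b _ h => Fin.val_injective h)]

private lemma aux_abel (γ : ℝ) (hγ0 : 0 ≤ γ) (hγ1 : γ ≤ 1) (D : ℕ → ℝ) :
    ∀ K : ℕ, (∀ k ≤ K, 0 ≤ D k) →
      γ ^ K * D K - D 0 ≤ ∑ k ∈ Finset.range K, γ ^ k * (D (k + 1) - D k) := by
  intro K
  induction K with
  | zero => intro _; simp
  | succ K ih =>
    intro hD
    rw [Finset.sum_range_succ]
    have h1 := ih (fun k hk => hD k (Nat.le_succ_of_le hk))
    have h2 : γ ^ (K + 1) ≤ γ ^ K := pow_le_pow_of_le_one hγ0 hγ1 (Nat.le_succ K)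
    have h3 : 0 ≤ D (K + 1) := hD _ le_rfl
    nlinarith [h1, mul_le_mul_of_nonneg_right h2 h3]

private lemma aux_prod_sets {E : Type*} [DecidableEq E] (v : E → ℝ) (hv : ∀ e, 0 ≤ v e)
    (S T : Finset E) (hcard : S.card = T.card)
    (h : ∀ t ∈ T, ∀ e, e ∉ T → v t ≤ v e) :
    ∏ e ∈ T, v e ≤ ∏ e ∈ S, v e := by
  have hTsub : T ∩ S ⊆ T := Finset.inter_subset_left
  have hSsub : T ∩ S ⊆ S := Finset.inter_subset_right
  rw [← Finset.prod_sdiff hTsub, ← Finset.prod_sdiff hSsub]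
  have hTd : T \ (T ∩ S) = T \ S := by rw [Finset.sdiff_inter_self_left]
  have hSd : S \ (T ∩ S) = S \ T := by
    rw [Finset.inter_comm, Finset.sdiff_inter_self_left]
  rw [hTd, hSd]
  have hc : (T \ S).card = (S \ T).card := by
    have h1 := Finset.card_inter_add_card_sdiff T S
    have h2 := Finset.card_inter_add_card_sdiff S T
    rw [Finset.inter_comm S T] at h2
    omega
  set φ := Finset.equivOfCardEq hc with hφ
  have key : ∏ e ∈ T \ S, v e ≤ ∏ e ∈ S \ T, v e := by
    rw [← Finset.prod_coe_sort (T \ S) v, ← Finset.prod_coe_sort (S \ T) v]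
    calc ∏ x : (T \ S : Finset E), v x
        ≤ ∏ x : (T \ S : Finset E), v (φ x) := by
          apply Finset.prod_le_prod
          · intro x _; exact hv _
          · intro x _
            have hxT : (x : E) ∈ T := (Finset.mem_sdiff.mp x.2).1
            have hφx : ((φ x : E)) ∈ S \ T := (φ x).2
            exact h _ hxT _ (Finset.mem_sdiff.mp hφx).2
      _ = ∏ y : (S \ T : Finset E), v y := Equiv.prod_comp φ (fun y => v y)
  have h0 : 0 ≤ ∏ e ∈ T ∩ S, v e := Finset.prod_nonneg (fun e _ => hv e)
  exact mul_le_mul_of_nonneg_right key h0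

private def auxExt {E : Type*} (wbar : E → ℝ) {K : ℕ} (B : Fin K → E) : ℕ → ℝ :=
  fun n => if h : n < K then wbar (B ⟨n, h⟩) else 0

private def auxP (c : ℕ → ℝ) (m : ℕ) : ℝ := ∏ i ∈ Finset.range m, (1 - c i)



/-- optimality of the sorted top-`K` list in the DBN model: let `E` be a
finite ground set with `|E| = L`, `w̄ : E → [0,1]`, `γ ∈ (0,1]` and `1 ≤ K ≤ L`. For a
list `A = (a_1, …, a_K)` of `K` distinct items define
`g(A) = Σ_{k=1}^K γ^{k−1} w̄(a_k) ∏_{i<k} (1 − w̄(a_i))`. If `A*` consists of `K` items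
with the largest weights, ordered in decreasing order of their weights, then
`g(A) ≤ g(A*)` for every list `A` of `K` distinct items. -/
theorem dbn_sorted_topK_optimal {E : Type*} [Fintype E] (L : ℕ) (hL : Fintype.card E = L)
    (wbar : E → ℝ) (hw : ∀ e, wbar e ∈ Set.Icc (0 : ℝ) 1)
    (γ : ℝ) (hγ0 : 0 < γ) (hγ1 : γ ≤ 1)
    (K : ℕ) (hK : 1 ≤ K) (hKL : K ≤ L)
    (Astar : Fin K → E) (hAstar : Function.Injective Astar)
    (hsorted : ∀ i j : Fin K, i ≤ j → wbar (Astar j) ≤ wbar (Astar i))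
    (htop : ∀ e : E, e ∉ Set.range Astar → wbar e ≤ wbar (Astar ⟨K - 1, by omega⟩)) :
    ∀ A : Fin K → E, Function.Injective A →
      (∑ k : Fin K, γ ^ (k : ℕ) * wbar (A k) *
        ∏ i ∈ Finset.univ.filter (fun i : Fin K => i < k), (1 - wbar (A i))) ≤
      (∑ k : Fin K, γ ^ (k : ℕ) * wbar (Astar k) *
        ∏ i ∈ Finset.univ.filter (fun i : Fin K => i < k), (1 - wbar (Astar i))) := by
  classical
  intro A hA
  set a := auxExt wbar Astar with ha_def
  set b := auxExt wbar A with hb_def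
  have haval : ∀ k : Fin K, a (k : ℕ) = wbar (Astar k) := by
    intro k; simp [ha_def, auxExt, k.isLt]
  have hbval : ∀ k : Fin K, b (k : ℕ) = wbar (A k) := by
    intro k; simp [hb_def, auxExt, k.isLt]
  -- conversion of the sums
  have conv : ∀ (B : Fin K → E) (c : ℕ → ℝ), (∀ k : Fin K, c (k : ℕ) = wbar (B k)) →
      (∑ k : Fin K, γ ^ (k : ℕ) * wbar (B k) *
        ∏ i ∈ Finset.univ.filter (fun i : Fin K => i < k), (1 - wbar (B i)))
      = ∑ k ∈ Finset.range K, γ ^ k * c k * auxP c k := by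
    intro B c hc
    rw [← Fin.sum_univ_eq_sum_range (fun k => γ ^ k * c k * auxP c k) K]
    apply Finset.sum_congr rfl
    intro k _
    have hprod : ∏ i ∈ Finset.univ.filter (fun i : Fin K => i < k), (1 - wbar (B i))
        = ∏ i ∈ Finset.univ.filter (fun i : Fin K => (i : ℕ) < (k : ℕ)),
            (fun n => 1 - c n) (i : ℕ) := by
      apply Finset.prod_congr
      · apply Finset.filter_congr; intro i _; exact Fin.lt_def
      · intro i _; simp only [hc i]
    rw [hprod, aux_filter_prod (fun n => 1 - c n) (k : ℕ) (le_of_lt k.isLt), hc k]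
    rfl
  rw [conv A b hbval, conv Astar a haval]
  -- key prefix-product comparison
  have hkey : ∀ m ≤ K, auxP a m ≤ auxP b m := by
    intro m hm
    have convP : ∀ (B : Fin K → E), Function.Injective B → (∀ k : Fin K,
        auxExt wbar B (k : ℕ) = wbar (B k)) →
        auxP (auxExt wbar B) m
          = ∏ e ∈ Finset.image B (Finset.univ.filter (fun i : Fin K => (i : ℕ) < m)),
              (1 - wbar e) := by
      intro B hB hBval
      rw [Finset.prod_image (fun x _ y _ h => hB h)]
      rw [show auxP (auxExt wbar B) m
          = ∏ i ∈ Finset.univ.filter (fun i : Fin K => (i : ℕ) < m),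
              (fun n => 1 - auxExt wbar B n) (i : ℕ) from
        (aux_filter_prod (fun n => 1 - auxExt wbar B n) m hm).symm]
      apply Finset.prod_congr rfl
      intro i _
      simp only [hBval i]
    rw [convP Astar hAstar haval, convP A hA hbval]
    apply aux_prod_sets (fun e => 1 - wbar e) (fun e => by
      have := (hw e).2; simp; linarith)
    · rw [Finset.card_image_of_injective _ hA, Finset.card_image_of_injective _ hAstar]
    · intro t ht e he
      simp only [Finset.mem_image, Finset.mem_filter, Finset.mem_univ, true_and] at ht he
      obtain ⟨i, hi, rfl⟩ := ht
      have : wbar e ≤ wbar (Astar i) := by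
        by_cases hre : e ∈ Set.range Astar
        · obtain ⟨j, rfl⟩ := hre
          have hj : ¬ ((j : ℕ) < m) := fun hj => he ⟨j, hj, rfl⟩
          exact hsorted i j (by omega)
        · have h1 := htop e hre
          have h2 : wbar (Astar ⟨K - 1, by omega⟩) ≤ wbar (Astar i) := by
            apply hsorted
            have := i.isLt
            simp only [Fin.le_def]
            omega
          linarith
      linarith
  -- Abel summation
  set D : ℕ → ℝ := fun k => auxP b k - auxP a k with hD_def
  have hD : ∀ k ≤ K, 0 ≤ D k := fun k hk => sub_nonneg.mpr (hkey k hk)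
  have habel := aux_abel γ hγ0.le hγ1 D K hD
  have hD0 : D 0 = 0 := by simp [hD_def, auxP]
  have hstep : ∀ c : ℕ → ℝ, ∀ k : ℕ, c k * auxP c k = auxP c k - auxP c (k + 1) := by
    intro c k
    simp only [auxP, Finset.prod_range_succ]
    ring
  have hdiff : ∑ k ∈ Finset.range K, γ ^ k * a k * auxP a k
      - ∑ k ∈ Finset.range K, γ ^ k * b k * auxP b k
      = ∑ k ∈ Finset.range K, γ ^ k * (D (k + 1) - D k) := by
    rw [← Finset.sum_sub_distrib]
    apply Finset.sum_congr rfl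
    intro k _
    calc γ ^ k * a k * auxP a k - γ ^ k * b k * auxP b k
        = γ ^ k * (a k * auxP a k) - γ ^ k * (b k * auxP b k) := by ring
      _ = γ ^ k * (auxP a k - auxP a (k + 1)) - γ ^ k * (auxP b k - auxP b (k + 1)) := by
          rw [hstep a k, hstep b k]
      _ = γ ^ k * (D (k + 1) - D k) := by simp only [hD_def]; ring
  have hfin : 0 ≤ γ ^ K * D K := mul_nonneg (pow_nonneg hγ0.le K) (hD K le_rfl)
  linarith [habel, hdiff]
end
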